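/- arXiv:1810.00080 — 4 statements merged into one kernel-verified Lean document; each statement's English description precedes it below -/
import Mathlib

section
/- Let φ ≠ 0, c ∈ ℝ and let x, y, z : I → ℝ be differentiable on an interval I. For the simply isotropic helicoidal surface of ni-type Y₂(u,t) = (x(u)cos(tφ) − y(u)sin(tφ), x(u)sin(tφ) + y(u)cos(tφ), c t), the coefficients of the first fundamental form with respect to ⟨·,·⟩_z satisfy g₁₁g₂₂ − g₁₂² = φ²(x x' + y y')². For the helicoidal surface of i-type Z₂(u,t) = (x(u)cos(tφ), x(u)sin(tφ), z(u) + c t), one has g₁₁g₂₂ − g₁₂² = φ²(x x')². In particular, Y₂ is admissible at u if and only if (x² + y²)'(u) ≠ 0, and Z₂ is admissible at u if and only if x(u)x'(u) ≠ 0. -/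
/-!
Both surfaces are orbits of a profile curve `(p, q, r)` under the rotation by `tφ` about the
isotropic `z`-axis combined with the translation by `ct` along it. By Lagrange's identity
`g₁₁g₂₂ − g₁₂²` is the square of the `z`-component of `X_u × X_t`; the `z`-coordinates drop
out, and the rotation makes this component `φ (p p' + q q')`, independently of `t`.
-/

open Real

/-- The determinant `g₁₁g₂₂ − g₁₂²` of the first fundamental form of a parametrized
surface `X(u,t)` in simply isotropic space, where `⟨u,v⟩_z = u₁v₁ + u₂v₂`. -/
noncomputable def isoGramDet (X : ℝ → ℝ → ℝ × ℝ × ℝ) (u t : ℝ) : ℝ :=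
  let Xu := deriv (fun u' => X u' t) u
  let Xt := deriv (fun t' => X u t') t
  (Xu.1 ^ 2 + Xu.2.1 ^ 2) * (Xt.1 ^ 2 + Xt.2.1 ^ 2)
    - (Xu.1 * Xt.1 + Xu.2.1 * Xt.2.1) ^ 2

theorem isoGramDet_eq_sq_of_hasDerivAt {X : ℝ → ℝ → ℝ × ℝ × ℝ} {u t : ℝ} {Xu Xt : ℝ × ℝ × ℝ}
    (hu : HasDerivAt (fun u' => X u' t) Xu u) (ht : HasDerivAt (fun t' => X u t') Xt t) :
    isoGramDet X u t = (Xu.1 * Xt.2.1 - Xu.2.1 * Xt.1) ^ 2 := by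
  unfold isoGramDet
  rw [hu.deriv, ht.deriv]
  ring

/-- The profile curve `(p, q, r)` rotated by the angle `tφ` about the `z`-axis and translated
by `ct` along it; the surfaces of ni-type and i-type are the cases `r = 0` and `q = 0`. -/
noncomputable def helicoidalSurface (φ c : ℝ) (p q r : ℝ → ℝ) : ℝ → ℝ → ℝ × ℝ × ℝ :=
  fun u t =>
    (p u * cos (t * φ) - q u * sin (t * φ), p u * sin (t * φ) + q u * cos (t * φ), r u + c * t)

section helicoidalSurface

variable (φ c : ℝ) {p q r : ℝ → ℝ} {u : ℝ} (t : ℝ)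

theorem hasDerivAt_helicoidalSurface_left (hp : DifferentiableAt ℝ p u)
    (hq : DifferentiableAt ℝ q u) (hr : DifferentiableAt ℝ r u) :
    HasDerivAt (fun u' => helicoidalSurface φ c p q r u' t)
      (deriv p u * cos (t * φ) - deriv q u * sin (t * φ),
        deriv p u * sin (t * φ) + deriv q u * cos (t * φ), deriv r u) u :=
  ((hp.hasDerivAt.mul_const _).sub (hq.hasDerivAt.mul_const _)).prodMk
    (((hp.hasDerivAt.mul_const _).add (hq.hasDerivAt.mul_const _)).prodMk
      (hr.hasDerivAt.add_const _))

theorem hasDerivAt_helicoidalSurface_right :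
    HasDerivAt (fun t' => helicoidalSurface φ c p q r u t')
      (-(φ * (p u * sin (t * φ) + q u * cos (t * φ))),
        φ * (p u * cos (t * φ) - q u * sin (t * φ)), c) t := by
  have hangle : HasDerivAt (fun t' : ℝ => t' * φ) φ t := by
    simpa using (hasDerivAt_id t).mul_const φ
  have hlin : HasDerivAt (fun t' : ℝ => r u + c * t') c t := by
    simpa using ((hasDerivAt_id t).const_mul c).const_add (r u)
  refine (((hangle.cos.const_mul (p u)).fun_sub (hangle.sin.const_mul (q u))).prodMk
    (((hangle.sin.const_mul (p u)).fun_add (hangle.cos.const_mul (q u))).prodMk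
      hlin)).congr_deriv ?_
  rw [Prod.mk.injEq, Prod.mk.injEq]
  exact ⟨by ring, by ring, rfl⟩

theorem isoGramDet_helicoidalSurface (hp : DifferentiableAt ℝ p u)
    (hq : DifferentiableAt ℝ q u) (hr : DifferentiableAt ℝ r u) :
    isoGramDet (helicoidalSurface φ c p q r) u t
      = φ ^ 2 * (p u * deriv p u + q u * deriv q u) ^ 2 := by
  rw [isoGramDet_eq_sq_of_hasDerivAt (hasDerivAt_helicoidalSurface_left φ c t hp hq hr)
    (hasDerivAt_helicoidalSurface_right φ c t)]
  linear_combination φ ^ 2 * (p u * deriv p u + q u * deriv q u) ^ 2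
    * (sin (t * φ) ^ 2 + cos (t * φ) ^ 2 + 1) * sin_sq_add_cos_sq (t * φ)

end helicoidalSurface

theorem deriv_sq_add_sq {f g : ℝ → ℝ} {u : ℝ} (hf : DifferentiableAt ℝ f u)
    (hg : DifferentiableAt ℝ g u) :
    deriv (fun u' => f u' ^ 2 + g u' ^ 2) u = 2 * (f u * deriv f u + g u * deriv g u) := by
  rw [((hf.hasDerivAt.fun_pow 2).fun_add (hg.hasDerivAt.fun_pow 2)).deriv]
  ring

/-- First fundamental form determinant and admissibility of simply
isotropic helicoidal surfaces of ni-type and i-type. -/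
theorem simplyIsotropic_helicoidal_gramDet_and_admissible
    (φ c : ℝ) (hφ : φ ≠ 0) (I : Set ℝ) (x y z : ℝ → ℝ)
    (hx : ∀ u ∈ I, DifferentiableAt ℝ x u)
    (hy : ∀ u ∈ I, DifferentiableAt ℝ y u)
    (hz : ∀ u ∈ I, DifferentiableAt ℝ z u) :
    ∀ u ∈ I, ∀ t : ℝ,
      (isoGramDet (fun u' t' =>
          (x u' * Real.cos (t' * φ) - y u' * Real.sin (t' * φ),
           x u' * Real.sin (t' * φ) + y u' * Real.cos (t' * φ),
           c * t')) u t
        = φ ^ 2 * (x u * deriv x u + y u * deriv y u) ^ 2) ∧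
      (isoGramDet (fun u' t' =>
          (x u' * Real.cos (t' * φ), x u' * Real.sin (t' * φ), z u' + c * t')) u t
        = φ ^ 2 * (x u * deriv x u) ^ 2) ∧
      (isoGramDet (fun u' t' =>
          (x u' * Real.cos (t' * φ) - y u' * Real.sin (t' * φ),
           x u' * Real.sin (t' * φ) + y u' * Real.cos (t' * φ),
           c * t')) u t ≠ 0
        ↔ deriv (fun u' => x u' ^ 2 + y u' ^ 2) u ≠ 0) ∧
      (isoGramDet (fun u' t' =>
          (x u' * Real.cos (t' * φ), x u' * Real.sin (t' * φ), z u' + c * t')) u t ≠ 0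
        ↔ x u * deriv x u ≠ 0) := by
  intro u hu t
  have hY := isoGramDet_helicoidalSurface φ c t (hx u hu) (hy u hu)
    (differentiableAt_const (0 : ℝ))
  have hZ := isoGramDet_helicoidalSurface φ c t (hx u hu) (differentiableAt_const (0 : ℝ))
    (hz u hu)
  unfold helicoidalSurface at hY hZ
  simp only [zero_add, zero_mul, sub_zero, add_zero, deriv_const', mul_zero] at hY hZ
  refine ⟨hY, hZ, ?_, ?_⟩
  · rw [hY, deriv_sq_add_sq (hx u hu) (hy u hu)]
    simp [hφ]
  · rw [hZ]
    simp [hφ]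
end

section
/- Let a, b, c, c₁, c₂ ∈ ℝ and let x, y, z : I → ℝ be differentiable on an interval I. For the pseudo-isotropic parabolic revolution surface of ni-type Yh₃(u,t) = (a t + x(u), b t + y(u), c t + (a c₁ + b c₂)t²/2 + c₁ t x(u) + c₂ t y(u)), the coefficients of the first fundamental form with respect to ⟨·,·⟩_pz satisfy g₁₁g₂₂ − g₁₂² = −(b x' − a y')². For the parabolic revolution surface of i-type Zh₃(u,t) = (a t + x(u), b t, c t + (a c₁ + b c₂)t²/2 + c₁ t x(u) + z(u)), one has g₁₁g₂₂ − g₁₂² = −b² x'². -/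
/-! Lagrange's identity for the indefinite form `u₁v₁ − u₂v₂` gives
`g₁₁g₂₂ − g₁₂² = −(X_u¹ X_t² − X_u² X_t¹)²`, so only the first two coordinates of the
partial derivatives matter; for both surfaces they are `(x', y')`, resp. `(x', 0)`, and `(a, b)`. -/

/-- The determinant `g₁₁g₂₂ − g₁₂²` of the first fundamental form of a parametrized
surface `X(u,t)` in pseudo-isotropic space, where `⟨u,v⟩_pz = u₁v₁ − u₂v₂`. -/
noncomputable def pseudoIsoGramDet (X : ℝ → ℝ → ℝ × ℝ × ℝ) (u t : ℝ) : ℝ :=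
  let Xu := deriv (fun u' => X u' t) u
  let Xt := deriv (fun t' => X u t') t
  (Xu.1 ^ 2 - Xu.2.1 ^ 2) * (Xt.1 ^ 2 - Xt.2.1 ^ 2)
    - (Xu.1 * Xt.1 - Xu.2.1 * Xt.2.1) ^ 2

theorem pseudoIsoGramDet_eq_neg_sq_of_hasDerivAt {X : ℝ → ℝ → ℝ × ℝ × ℝ} {u t : ℝ}
    {p q : ℝ × ℝ × ℝ} (hu : HasDerivAt (fun u' => X u' t) p u)
    (ht : HasDerivAt (fun t' => X u t') q t) :
    pseudoIsoGramDet X u t = -(p.1 * q.2.1 - p.2.1 * q.1) ^ 2 := by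
  simp only [pseudoIsoGramDet, hu.deriv, ht.deriv]
  ring

/-- First fundamental form determinant of pseudo-isotropic parabolic
revolution surfaces of ni-type and i-type. -/
theorem pseudoIsotropic_parabolicRevolution_gramDet
    (a b c c₁ c₂ : ℝ) (I : Set ℝ) (x y z : ℝ → ℝ)
    (hx : ∀ u ∈ I, DifferentiableAt ℝ x u)
    (hy : ∀ u ∈ I, DifferentiableAt ℝ y u)
    (hz : ∀ u ∈ I, DifferentiableAt ℝ z u) :
    ∀ u ∈ I, ∀ t : ℝ,
      (pseudoIsoGramDet (fun u' t' =>
          (a * t' + x u', b * t' + y u',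
           c * t' + (a * c₁ + b * c₂) * t' ^ 2 / 2 + c₁ * t' * x u' + c₂ * t' * y u')) u t
        = -((b * deriv x u - a * deriv y u) ^ 2)) ∧
      (pseudoIsoGramDet (fun u' t' =>
          (a * t' + x u', b * t',
           c * t' + (a * c₁ + b * c₂) * t' ^ 2 / 2 + c₁ * t' * x u' + z u')) u t
        = -(b ^ 2 * (deriv x u) ^ 2)) := by
  intro u hu t
  have hxu := (hx u hu).hasDerivAt
  have hyu := (hy u hu).hasDerivAt
  have hat : HasDerivAt (fun t' => a * t') a t := by simpa using (hasDerivAt_id t).const_mul a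
  have hbt : HasDerivAt (fun t' => b * t') b t := by simpa using (hasDerivAt_id t).const_mul b
  constructor
  · rw [pseudoIsoGramDet_eq_neg_sq_of_hasDerivAt ?hu ?ht]
    case hu => exact (hxu.const_add _).prodMk ((hyu.const_add _).prodMk
      (DifferentiableAt.hasDerivAt (by fun_prop)))
    case ht => exact (hat.add_const _).prodMk ((hbt.add_const _).prodMk
      (DifferentiableAt.hasDerivAt (by fun_prop)))
    ring
  · rw [pseudoIsoGramDet_eq_neg_sq_of_hasDerivAt ?hu ?ht]
    case hu => exact (hxu.const_add _).prodMk ((hasDerivAt_const _ _).prodMk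
      (DifferentiableAt.hasDerivAt (by fun_prop)))
    case ht => exact (hat.add_const _).prodMk (hbt.prodMk
      (DifferentiableAt.hasDerivAt (by fun_prop)))
    ring
end

section
/- Let φ ≠ 0, c ∈ ℝ and let x, y : I → ℝ be twice differentiable with x(u)x'(u) + y(u)y'(u) ≠ 0 on I. For the simply isotropic helicoidal surface of ni-type Y₂(u,t) = (x(u)cos(tφ) − y(u)sin(tφ), x(u)sin(tφ) + y(u)cos(tφ), c t), the isotropic Gaussian and mean curvatures satisfy, for all (u,t): K = (c²/φ²)·[(x'y − x y')(x''y' − x'y'') − (x'² + y'²)²]/(x x' + y y')⁴ and H = (c/φ)·[(x² + y²)(x''y' − x'y'') + (x'² + y'²)(x y' − x' y)]/(2 (x x' + y y')³). -/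
/-!
Write `Y(u, t) = R(tφ) (x u, y u, c t)` with `R(θ)` the rotation about the isotropic `z`-axis.
Every partial derivative of `Y` up to order two is `R(tφ)` applied to an explicit vector, and
`R(θ)` preserves the Euclidean and isotropic inner products, the cross product and the third
coordinate. Hence `g_ij` and `h_ij` can be computed from the unrotated vectors, where they
are polynomial in `x, y` and their derivatives (divided by `φ (x x' + y y')` for `h_ij`), and
`K`, `H` follow by algebra, the denominator being `g₁₁g₂₂ − g₁₂² = (φ (x x' + y y'))²`.

The only delicate point is `Y_uu`: the hypotheses give no neighbourhood of `u` on which `x`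
and `y` are differentiable. If there is none, Lean's junk values make `Y_uu = 0`, and then
`x'(u) = x''(u) = 0` or `y'(u) = y''(u) = 0`, so both sides of `h₁₁` vanish.
-/

/-- Euclidean cross product on `ℝ × ℝ × ℝ`. -/
def cross3 (p q : ℝ × ℝ × ℝ) : ℝ × ℝ × ℝ :=
  (p.2.1 * q.2.2 - p.2.2 * q.2.1, p.2.2 * q.1 - p.1 * q.2.2, p.1 * q.2.1 - p.2.1 * q.1)

/-- Euclidean inner product on `ℝ × ℝ × ℝ`. -/
def dot3 (p q : ℝ × ℝ × ℝ) : ℝ :=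
  p.1 * q.1 + p.2.1 * q.2.1 + p.2.2 * q.2.2

/-- Partial derivative of a parametrized surface in the first variable. -/
noncomputable def partialU (X : ℝ → ℝ → ℝ × ℝ × ℝ) (u t : ℝ) : ℝ × ℝ × ℝ :=
  deriv (fun u' => X u' t) u

/-- Partial derivative of a parametrized surface in the second variable. -/
noncomputable def partialT (X : ℝ → ℝ → ℝ × ℝ × ℝ) (u t : ℝ) : ℝ × ℝ × ℝ :=
  deriv (fun t' => X u t') t

/-- The relative normal `N_h = (X_u × X_t) / (X_u × X_t)₃`, i.e. the Euclidean cross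
product of the partial derivatives normalized to have third component `1`. -/
noncomputable def relNormal (X : ℝ → ℝ → ℝ × ℝ × ℝ) (u t : ℝ) : ℝ × ℝ × ℝ :=
  let n := cross3 (partialU X u t) (partialT X u t)
  (n.1 / n.2.2, n.2.1 / n.2.2, 1)

/-- Second fundamental form coefficient `h₁₁ = ⟨N_h, X_uu⟩`. -/
noncomputable def h11 (X : ℝ → ℝ → ℝ × ℝ × ℝ) (u t : ℝ) : ℝ :=
  dot3 (relNormal X u t) (deriv (fun u' => partialU X u' t) u)

/-- Second fundamental form coefficient `h₁₂ = ⟨N_h, X_ut⟩`. -/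
noncomputable def h12 (X : ℝ → ℝ → ℝ × ℝ × ℝ) (u t : ℝ) : ℝ :=
  dot3 (relNormal X u t) (deriv (fun t' => partialU X u t') t)

/-- Second fundamental form coefficient `h₂₂ = ⟨N_h, X_tt⟩`. -/
noncomputable def h22 (X : ℝ → ℝ → ℝ × ℝ × ℝ) (u t : ℝ) : ℝ :=
  dot3 (relNormal X u t) (deriv (fun t' => partialT X u t') t)

/-- First fundamental form coefficient `g₁₁ = ⟨X_u, X_u⟩_z` for the simply isotropic
inner product `⟨u,v⟩_z = u₁v₁ + u₂v₂`. -/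
noncomputable def g11 (X : ℝ → ℝ → ℝ × ℝ × ℝ) (u t : ℝ) : ℝ :=
  (partialU X u t).1 ^ 2 + (partialU X u t).2.1 ^ 2

/-- First fundamental form coefficient `g₁₂ = ⟨X_u, X_t⟩_z`. -/
noncomputable def g12 (X : ℝ → ℝ → ℝ × ℝ × ℝ) (u t : ℝ) : ℝ :=
  (partialU X u t).1 * (partialT X u t).1 + (partialU X u t).2.1 * (partialT X u t).2.1

/-- First fundamental form coefficient `g₂₂ = ⟨X_t, X_t⟩_z`. -/
noncomputable def g22 (X : ℝ → ℝ → ℝ × ℝ × ℝ) (u t : ℝ) : ℝ :=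
  (partialT X u t).1 ^ 2 + (partialT X u t).2.1 ^ 2

/-- The isotropic Gaussian curvature `K = (h₁₁h₂₂ − h₁₂²)/(g₁₁g₂₂ − g₁₂²)`. -/
noncomputable def Kiso (X : ℝ → ℝ → ℝ × ℝ × ℝ) (u t : ℝ) : ℝ :=
  (h11 X u t * h22 X u t - h12 X u t ^ 2)
    / (g11 X u t * g22 X u t - g12 X u t ^ 2)

/-- The isotropic mean curvature
`H = (g₁₁h₂₂ − 2g₁₂h₁₂ + g₂₂h₁₁)/(2(g₁₁g₂₂ − g₁₂²))`. -/
noncomputable def Hiso (X : ℝ → ℝ → ℝ × ℝ × ℝ) (u t : ℝ) : ℝ :=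
  (g11 X u t * h22 X u t - 2 * g12 X u t * h12 X u t + g22 X u t * h11 X u t)
    / (2 * (g11 X u t * g22 X u t - g12 X u t ^ 2))

open Real Filter Topology

noncomputable def rotZ (θ : ℝ) (p : ℝ × ℝ × ℝ) : ℝ × ℝ × ℝ :=
  (p.1 * cos θ - p.2.1 * sin θ, p.1 * sin θ + p.2.1 * cos θ, p.2.2)

noncomputable def niHelicoid (φ c : ℝ) (x y : ℝ → ℝ) (u t : ℝ) : ℝ × ℝ × ℝ :=
  rotZ (t * φ) (x u, y u, c * t)

section rotZ

variable (θ : ℝ)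

theorem rotZ_neg_rotZ (p : ℝ × ℝ × ℝ) : rotZ (-θ) (rotZ θ p) = p := by
  obtain ⟨a, b, e⟩ := p
  simp only [rotZ, cos_neg, sin_neg, Prod.mk.injEq, and_true]
  constructor
  · linear_combination a * sin_sq_add_cos_sq θ
  · linear_combination b * sin_sq_add_cos_sq θ

theorem dot3_rotZ (p q : ℝ × ℝ × ℝ) : dot3 (rotZ θ p) (rotZ θ q) = dot3 p q := by
  simp only [dot3, rotZ]
  linear_combination (p.1 * q.1 + p.2.1 * q.2.1) * sin_sq_add_cos_sq θ

theorem cross3_rotZ (p q : ℝ × ℝ × ℝ) : cross3 (rotZ θ p) (rotZ θ q) = rotZ θ (cross3 p q) := by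
  simp only [cross3, rotZ, Prod.mk.injEq]
  refine ⟨by ring, by ring, ?_⟩
  linear_combination (p.1 * q.2.1 - p.2.1 * q.1) * sin_sq_add_cos_sq θ

theorem hasDerivAt_rotZ {a b e : ℝ → ℝ} {a' b' e' s : ℝ} (ha : HasDerivAt a a' s)
    (hb : HasDerivAt b b' s) (he : HasDerivAt e e' s) :
    HasDerivAt (fun r => rotZ θ (a r, b r, e r)) (rotZ θ (a', b', e')) s :=
  ((ha.mul_const _).sub (hb.mul_const _)).prodMk
    (((ha.mul_const _).add (hb.mul_const _)).prodMk he)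

end rotZ

theorem hasDerivAt_rotZ_mul (φ a b : ℝ) {e : ℝ → ℝ} {e' s : ℝ} (he : HasDerivAt e e' s) :
    HasDerivAt (fun r => rotZ (r * φ) (a, b, e r)) (rotZ (s * φ) (-(φ * b), φ * a, e')) s := by
  have hcos := (hasDerivAt_mul_const φ (x := s)).cos
  have hsin := (hasDerivAt_mul_const φ (x := s)).sin
  refine (((hcos.const_mul a).sub (hsin.const_mul b)).prodMk
    (((hsin.const_mul a).add (hcos.const_mul b)).prodMk he)).congr_deriv ?_
  ext <;> simp only [rotZ] <;> ring

theorem relNormal_eq_rotZ {X : ℝ → ℝ → ℝ × ℝ × ℝ} {u t θ : ℝ} {p q : ℝ × ℝ × ℝ}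
    (hU : partialU X u t = rotZ θ p) (hT : partialT X u t = rotZ θ q) :
    relNormal X u t = rotZ θ ((cross3 p q).1 / (cross3 p q).2.2,
      (cross3 p q).2.1 / (cross3 p q).2.2, 1) := by
  simp only [relNormal, hU, hT, cross3_rotZ]
  simp only [rotZ, Prod.mk.injEq, and_true]
  constructor <;> ring

theorem deriv_eq_zero_and_deriv_deriv_eq_zero_of_frequently_not_differentiableAt
    {f : ℝ → ℝ} {u : ℝ} (hf' : DifferentiableAt ℝ (deriv f) u)
    (h : ∃ᶠ v in 𝓝[≠] u, ¬DifferentiableAt ℝ f v) :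
    deriv f u = 0 ∧ deriv (deriv f) u = 0 := by
  have h0 : ∃ᶠ v in 𝓝[≠] u, deriv f v = 0 := h.mono fun _ => deriv_zero_of_not_differentiableAt
  exact ⟨tendsto_nhds_unique_of_frequently_eq
    (hf'.continuousAt.tendsto.mono_left nhdsWithin_le_nhds) tendsto_const_nhds h0,
    deriv_zero_of_frequently_const h0⟩

section niHelicoid

variable {φ c : ℝ} {x y : ℝ → ℝ} {u t : ℝ}

theorem partialU_niHelicoid (hx : DifferentiableAt ℝ x u) (hy : DifferentiableAt ℝ y u) :
    partialU (niHelicoid φ c x y) u t = rotZ (t * φ) (deriv x u, deriv y u, 0) :=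
  (hasDerivAt_rotZ _ hx.hasDerivAt hy.hasDerivAt (hasDerivAt_const _ _)).deriv

theorem partialU_niHelicoid_eq_zero (h : ¬(DifferentiableAt ℝ x u ∧ DifferentiableAt ℝ y u)) :
    partialU (niHelicoid φ c x y) u t = 0 := by
  refine deriv_zero_of_not_differentiableAt fun hX => h ?_
  have hinv := (hasDerivAt_rotZ (-(t * φ)) hX.fst.hasDerivAt hX.snd.fst.hasDerivAt
    hX.snd.snd.hasDerivAt).differentiableAt
  simp only [Prod.mk.eta, niHelicoid, rotZ_neg_rotZ] at hinv
  exact ⟨hinv.fst, hinv.snd.fst⟩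

theorem partialT_niHelicoid (s : ℝ) :
    partialT (niHelicoid φ c x y) u s = rotZ (s * φ) (-(φ * y u), φ * x u, c) := by
  exact (hasDerivAt_rotZ_mul φ (x u) (y u) (hasDerivAt_const_mul c)).deriv

theorem partialUU_niHelicoid_of_eventually
    (h : ∀ᶠ v in 𝓝 u, DifferentiableAt ℝ x v ∧ DifferentiableAt ℝ y v)
    (hx' : DifferentiableAt ℝ (deriv x) u) (hy' : DifferentiableAt ℝ (deriv y) u) :
    deriv (fun v => partialU (niHelicoid φ c x y) v t) u =
      rotZ (t * φ) (deriv (deriv x) u, deriv (deriv y) u, 0) := by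
  have hU : (fun v => partialU (niHelicoid φ c x y) v t) =ᶠ[𝓝 u]
      fun v => rotZ (t * φ) (deriv x v, deriv y v, 0) :=
    h.mono fun _ hv => partialU_niHelicoid hv.1 hv.2
  rw [hU.deriv_eq]
  exact (hasDerivAt_rotZ _ hx'.hasDerivAt hy'.hasDerivAt (hasDerivAt_const _ _)).deriv

theorem partialUU_niHelicoid_of_frequently
    (h : ∃ᶠ v in 𝓝[≠] u, ¬(DifferentiableAt ℝ x v ∧ DifferentiableAt ℝ y v)) :
    deriv (fun v => partialU (niHelicoid φ c x y) v t) u = 0 :=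
  deriv_zero_of_frequently_const (h.mono fun _ => partialU_niHelicoid_eq_zero)

theorem partialUT_niHelicoid (hx : DifferentiableAt ℝ x u) (hy : DifferentiableAt ℝ y u) :
    deriv (fun s => partialU (niHelicoid φ c x y) u s) t =
      rotZ (t * φ) (-(φ * deriv y u), φ * deriv x u, 0) := by
  simp only [partialU_niHelicoid hx hy]
  exact (hasDerivAt_rotZ_mul φ _ _ (hasDerivAt_const t 0)).deriv

theorem partialTT_niHelicoid :
    deriv (fun s => partialT (niHelicoid φ c x y) u s) t =
      rotZ (t * φ) (-(φ * (φ * x u)), φ * -(φ * y u), 0) := by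
  simp only [partialT_niHelicoid]
  exact (hasDerivAt_rotZ_mul φ _ _ (hasDerivAt_const t c)).deriv

theorem relNormal_niHelicoid (hx : DifferentiableAt ℝ x u) (hy : DifferentiableAt ℝ y u) :
    relNormal (niHelicoid φ c x y) u t =
      rotZ (t * φ) (c * deriv y u / (φ * (x u * deriv x u + y u * deriv y u)),
        -(c * deriv x u) / (φ * (x u * deriv x u + y u * deriv y u)), 1) := by
  rw [relNormal_eq_rotZ (partialU_niHelicoid hx hy) (partialT_niHelicoid t)]
  congr 1
  simp only [cross3, Prod.mk.injEq, and_true]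
  constructor <;> ring

theorem g11_niHelicoid (hx : DifferentiableAt ℝ x u) (hy : DifferentiableAt ℝ y u) :
    g11 (niHelicoid φ c x y) u t = deriv x u ^ 2 + deriv y u ^ 2 := by
  simp only [g11, partialU_niHelicoid hx hy, rotZ]
  linear_combination (deriv x u ^ 2 + deriv y u ^ 2) * sin_sq_add_cos_sq (t * φ)

theorem g12_niHelicoid (hx : DifferentiableAt ℝ x u) (hy : DifferentiableAt ℝ y u) :
    g12 (niHelicoid φ c x y) u t = φ * (x u * deriv y u - y u * deriv x u) := by
  simp only [g12, partialU_niHelicoid hx hy, partialT_niHelicoid, rotZ]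
  linear_combination φ * (x u * deriv y u - y u * deriv x u) * sin_sq_add_cos_sq (t * φ)

theorem g22_niHelicoid : g22 (niHelicoid φ c x y) u t = φ ^ 2 * (x u ^ 2 + y u ^ 2) := by
  simp only [g22, partialT_niHelicoid, rotZ]
  linear_combination φ ^ 2 * (x u ^ 2 + y u ^ 2) * sin_sq_add_cos_sq (t * φ)

theorem h11_niHelicoid (hx : DifferentiableAt ℝ x u) (hy : DifferentiableAt ℝ y u)
    (hx' : DifferentiableAt ℝ (deriv x) u) (hy' : DifferentiableAt ℝ (deriv y) u) :
    h11 (niHelicoid φ c x y) u t =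
      c * (deriv (deriv x) u * deriv y u - deriv x u * deriv (deriv y) u) /
        (φ * (x u * deriv x u + y u * deriv y u)) := by
  rw [h11, relNormal_niHelicoid hx hy]
  by_cases hgood : ∀ᶠ v in 𝓝 u, DifferentiableAt ℝ x v ∧ DifferentiableAt ℝ y v
  · rw [partialUU_niHelicoid_of_eventually hgood hx' hy', dot3_rotZ]
    simp only [dot3]
    ring
  have hbad : ∃ᶠ v in 𝓝[≠] u, ¬(DifferentiableAt ℝ x v ∧ DifferentiableAt ℝ y v) := by
    rw [frequently_nhdsWithin_iff]
    exact (not_eventually.mp hgood).mono fun v hv => ⟨hv, by rintro rfl; exact hv ⟨hx, hy⟩⟩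
  have hcross : deriv (deriv x) u * deriv y u - deriv x u * deriv (deriv y) u = 0 := by
    rcases frequently_or_distrib.mp (hbad.mono fun _ => not_and_or.mp) with hbx | hby
    · obtain ⟨hx0, hxx0⟩ :=
        deriv_eq_zero_and_deriv_deriv_eq_zero_of_frequently_not_differentiableAt hx' hbx
      rw [hx0, hxx0]
      ring
    · obtain ⟨hy0, hyy0⟩ :=
        deriv_eq_zero_and_deriv_deriv_eq_zero_of_frequently_not_differentiableAt hy' hby
      rw [hy0, hyy0]
      ring
  rw [partialUU_niHelicoid_of_frequently hbad, hcross]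
  simp [dot3]

theorem h12_niHelicoid (hx : DifferentiableAt ℝ x u) (hy : DifferentiableAt ℝ y u) :
    h12 (niHelicoid φ c x y) u t = -(φ * c * (deriv x u ^ 2 + deriv y u ^ 2)) /
      (φ * (x u * deriv x u + y u * deriv y u)) := by
  rw [h12, relNormal_niHelicoid hx hy, partialUT_niHelicoid hx hy, dot3_rotZ]
  simp only [dot3]
  ring

theorem h22_niHelicoid (hx : DifferentiableAt ℝ x u) (hy : DifferentiableAt ℝ y u) :
    h22 (niHelicoid φ c x y) u t = -(φ ^ 2 * c * (x u * deriv y u - y u * deriv x u)) /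
      (φ * (x u * deriv x u + y u * deriv y u)) := by
  rw [h22, relNormal_niHelicoid hx hy, partialTT_niHelicoid, dot3_rotZ]
  simp only [dot3]
  ring

end niHelicoid

/-- Gaussian and mean curvature of the simply isotropic helicoidal
surface of ni-type
`Y₂(u,t) = (x cos(tφ) − y sin(tφ), x sin(tφ) + y cos(tφ), c t)`. -/
theorem simplyIsotropic_helicoidal_niType_curvatures
    (φ c : ℝ) (hφ : φ ≠ 0) (I : Set ℝ) (x y : ℝ → ℝ)
    (hx : ∀ u ∈ I, DifferentiableAt ℝ x u)
    (hx' : ∀ u ∈ I, DifferentiableAt ℝ (deriv x) u)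
    (hy : ∀ u ∈ I, DifferentiableAt ℝ y u)
    (hy' : ∀ u ∈ I, DifferentiableAt ℝ (deriv y) u)
    (hne : ∀ u ∈ I, x u * deriv x u + y u * deriv y u ≠ 0) :
    ∀ u ∈ I, ∀ t : ℝ,
      (Kiso (fun u' t' =>
          (x u' * Real.cos (t' * φ) - y u' * Real.sin (t' * φ),
           x u' * Real.sin (t' * φ) + y u' * Real.cos (t' * φ),
           c * t')) u t
        = c ^ 2 / φ ^ 2 *
            ((deriv x u * y u - x u * deriv y u) *
                (deriv (deriv x) u * deriv y u - deriv x u * deriv (deriv y) u)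
              - ((deriv x u) ^ 2 + (deriv y u) ^ 2) ^ 2)
            / (x u * deriv x u + y u * deriv y u) ^ 4) ∧
      (Hiso (fun u' t' =>
          (x u' * Real.cos (t' * φ) - y u' * Real.sin (t' * φ),
           x u' * Real.sin (t' * φ) + y u' * Real.cos (t' * φ),
           c * t')) u t
        = c / φ *
            ((x u ^ 2 + y u ^ 2) *
                (deriv (deriv x) u * deriv y u - deriv x u * deriv (deriv y) u)
              + ((deriv x u) ^ 2 + (deriv y u) ^ 2) *
                (x u * deriv y u - deriv x u * y u))
            / (2 * (x u * deriv x u + y u * deriv y u) ^ 3)) := by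
  intro u hu t
  change Kiso (niHelicoid φ c x y) u t = _ ∧ Hiso (niHelicoid φ c x y) u t = _
  have hx := hx u hu
  have hy := hy u hu
  have hφS : φ * (x u * deriv x u + y u * deriv y u) ≠ 0 := mul_ne_zero hφ (hne u hu)
  have hdet : g11 (niHelicoid φ c x y) u t * g22 (niHelicoid φ c x y) u t -
      g12 (niHelicoid φ c x y) u t ^ 2 = (φ * (x u * deriv x u + y u * deriv y u)) ^ 2 := by
    rw [g11_niHelicoid hx hy, g12_niHelicoid hx hy, g22_niHelicoid]
    ring
  rw [Kiso, Hiso, hdet, h11_niHelicoid hx hy (hx' u hu) (hy' u hu), h12_niHelicoid hx hy,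
    h22_niHelicoid hx hy, g11_niHelicoid hx hy, g12_niHelicoid hx hy, g22_niHelicoid]
  constructor <;> field_simp <;> ring
end

section
/- Let φ ≠ 0, c ∈ ℝ and let x, z : I → ℝ be twice differentiable with x(u) ≠ 0 and x'(u) ≠ 0 on I. For the simply isotropic helicoidal surface of i-type Z₂(u,t) = (x(u)cos(tφ), x(u)sin(tφ), z(u) + c t), the isotropic Gaussian and mean curvatures satisfy, for all (u,t): K = −z'(x''z' − x'z'')/(x x'⁴) − c²/(φ² x⁴) and H = [x'² z' − x (x''z' − x'z'')]/(2 x x'³). -/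
/-!
Both partial derivatives of `Z₂` are explicit: `Z_u = (x' cos tφ, x' sin tφ, z')` and
`Z_t = (-xφ sin tφ, xφ cos tφ, c)`, so `g₁₂ = 0`, `g₁₁ g₂₂ = x'² x² φ²` and the third component
of `Z_u × Z_t` is `x x' φ ≠ 0`; each `hᵢⱼ` is then a trigonometric identity modulo
`sin² + cos² = 1`. The one analytic subtlety is `Z_uu`, since `z` is only known to be
differentiable at `u` itself: if `z` fails to be differentiable at points accumulating at `u`,
then `Z_u`, `z'` and hence `z''` vanish at those points, so `Z_uu = 0` and `z'(u) = z''(u) = 0`,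
and both sides of `h₁₁ = (x'z'' - x''z')/x'` are `0`.
-/

open Filter Topology Real

section Calculus

variable {𝕜 F : Type*} [NontriviallyNormedField 𝕜] [NormedAddCommGroup F] [NormedSpace 𝕜 F]
  {f : 𝕜 → F} {a : 𝕜}

theorem eventually_differentiableAt_of_deriv_ne_zero (hf : ContinuousAt (deriv f) a)
    (h : deriv f a ≠ 0) : ∀ᶠ y in 𝓝 a, DifferentiableAt 𝕜 f y :=
  (hf.eventually_ne h).mono fun _ => differentiableAt_of_deriv_ne_zero

theorem deriv_deriv_eq_zero_of_frequently_not_differentiableAt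
    (h : ∃ᶠ y in 𝓝[≠] a, ¬DifferentiableAt 𝕜 f y) : deriv (deriv f) a = 0 :=
  deriv_zero_of_frequently_const (h.mono fun _ => deriv_zero_of_not_differentiableAt)

theorem deriv_eq_zero_of_frequently_not_differentiableAt (hf : ContinuousAt (deriv f) a)
    (h : ∃ᶠ y in 𝓝[≠] a, ¬DifferentiableAt 𝕜 f y) : deriv f a = 0 :=
  tendsto_nhds_unique_of_frequently_eq (hf.tendsto.mono_left nhdsWithin_le_nhds)
    tendsto_const_nhds (h.mono fun _ => deriv_zero_of_not_differentiableAt)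

end Calculus

theorem hasDerivAt_const_mul_cos_mul (a φ t : ℝ) :
    HasDerivAt (fun s => a * cos (s * φ)) (-(a * φ) * sin (t * φ)) t :=
  ((hasDerivAt_mul_const φ).cos.const_mul a).congr_deriv (by ring)

theorem hasDerivAt_const_mul_sin_mul (a φ t : ℝ) :
    HasDerivAt (fun s => a * sin (s * φ)) (a * φ * cos (t * φ)) t :=
  ((hasDerivAt_mul_const φ).sin.const_mul a).congr_deriv (by ring)

noncomputable def helicoidalIType (φ c : ℝ) (x z : ℝ → ℝ) : ℝ → ℝ → ℝ × ℝ × ℝ :=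
  fun u t => (x u * cos (t * φ), x u * sin (t * φ), z u + c * t)

namespace helicoidalIType

variable {φ c : ℝ} {x z : ℝ → ℝ} {u t : ℝ}

theorem partialU_eq (hx : DifferentiableAt ℝ x u) (hz : DifferentiableAt ℝ z u) (t : ℝ) :
    partialU (helicoidalIType φ c x z) u t =
      (deriv x u * cos (t * φ), deriv x u * sin (t * φ), deriv z u) :=
  ((hx.hasDerivAt.mul_const _).prodMk
    ((hx.hasDerivAt.mul_const _).prodMk (hz.hasDerivAt.add_const _))).deriv

theorem partialU_of_not_differentiableAt (hz : ¬DifferentiableAt ℝ z u) (t : ℝ) :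
    partialU (helicoidalIType φ c x z) u t = 0 :=
  deriv_zero_of_not_differentiableAt fun hd =>
    hz (by simpa [helicoidalIType] using hd.snd.snd.add_const (-(c * t)))

theorem partialT_eq (u t : ℝ) :
    partialT (helicoidalIType φ c x z) u t =
      (-(x u * φ) * sin (t * φ), x u * φ * cos (t * φ), c) :=
  ((hasDerivAt_const_mul_cos_mul _ _ _).prodMk ((hasDerivAt_const_mul_sin_mul _ _ _).prodMk
    (((hasDerivAt_id' t).const_mul c).const_add (z u) |>.congr_deriv (mul_one c)))).deriv

theorem deriv_partialU_t (hx : DifferentiableAt ℝ x u) (hz : DifferentiableAt ℝ z u) :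
    deriv (fun t' => partialU (helicoidalIType φ c x z) u t') t =
      (-(deriv x u * φ) * sin (t * φ), deriv x u * φ * cos (t * φ), 0) := by
  simp_rw [partialU_eq hx hz]
  exact ((hasDerivAt_const_mul_cos_mul _ _ _).prodMk
    ((hasDerivAt_const_mul_sin_mul _ _ _).prodMk (hasDerivAt_const _ _))).deriv

theorem deriv_partialT_t :
    deriv (fun t' => partialT (helicoidalIType φ c x z) u t') t =
      (-(x u * φ ^ 2) * cos (t * φ), -(x u * φ ^ 2) * sin (t * φ), 0) := by
  simp_rw [partialT_eq]
  exact (((hasDerivAt_const_mul_sin_mul _ _ _).congr_deriv (by ring)).prodMk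
    (((hasDerivAt_const_mul_cos_mul _ _ _).congr_deriv (by ring)).prodMk
      (hasDerivAt_const _ _))).deriv

theorem deriv_partialU_u (hx : ∀ᶠ y in 𝓝 u, DifferentiableAt ℝ x y)
    (hz : ∀ᶠ y in 𝓝 u, DifferentiableAt ℝ z y) (hx' : DifferentiableAt ℝ (deriv x) u)
    (hz' : DifferentiableAt ℝ (deriv z) u) :
    deriv (fun u' => partialU (helicoidalIType φ c x z) u' t) u =
      (deriv (deriv x) u * cos (t * φ), deriv (deriv x) u * sin (t * φ), deriv (deriv z) u) := by
  have hZu : (fun u' => partialU (helicoidalIType φ c x z) u' t) =ᶠ[𝓝 u]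
      fun u' => (deriv x u' * cos (t * φ), deriv x u' * sin (t * φ), deriv z u') :=
    (hx.and hz).mono fun _ h => partialU_eq h.1 h.2 t
  rw [hZu.deriv_eq]
  exact ((hx'.hasDerivAt.mul_const _).prodMk
    ((hx'.hasDerivAt.mul_const _).prodMk hz'.hasDerivAt)).deriv

theorem deriv_partialU_u_of_frequently_not_differentiableAt
    (hz : ∃ᶠ y in 𝓝[≠] u, ¬DifferentiableAt ℝ z y) :
    deriv (fun u' => partialU (helicoidalIType φ c x z) u' t) u = 0 :=
  deriv_zero_of_frequently_const (hz.mono fun _ h => partialU_of_not_differentiableAt h t)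

theorem g11_eq (hx : DifferentiableAt ℝ x u) (hz : DifferentiableAt ℝ z u) :
    g11 (helicoidalIType φ c x z) u t = deriv x u ^ 2 := by
  rw [g11, partialU_eq hx hz]
  linear_combination deriv x u ^ 2 * sin_sq_add_cos_sq (t * φ)

theorem g12_eq (hx : DifferentiableAt ℝ x u) (hz : DifferentiableAt ℝ z u) :
    g12 (helicoidalIType φ c x z) u t = 0 := by
  rw [g12, partialU_eq hx hz, partialT_eq]
  ring

theorem g22_eq : g22 (helicoidalIType φ c x z) u t = x u ^ 2 * φ ^ 2 := by
  rw [g22, partialT_eq]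
  linear_combination x u ^ 2 * φ ^ 2 * sin_sq_add_cos_sq (t * φ)

theorem relNormal_eq (hx : DifferentiableAt ℝ x u) (hz : DifferentiableAt ℝ z u) :
    relNormal (helicoidalIType φ c x z) u t =
      ((c * deriv x u * sin (t * φ) - x u * φ * deriv z u * cos (t * φ))
          / (x u * deriv x u * φ),
        (-(x u * φ * deriv z u * sin (t * φ)) - c * deriv x u * cos (t * φ))
          / (x u * deriv x u * φ), 1) := by
  have hcross : cross3 (partialU (helicoidalIType φ c x z) u t)
      (partialT (helicoidalIType φ c x z) u t) =
      (c * deriv x u * sin (t * φ) - x u * φ * deriv z u * cos (t * φ),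
        -(x u * φ * deriv z u * sin (t * φ)) - c * deriv x u * cos (t * φ),
        x u * deriv x u * φ) := by
    rw [partialU_eq hx hz, partialT_eq, cross3, Prod.mk.injEq, Prod.mk.injEq]
    exact ⟨by ring, by ring,
      by linear_combination x u * deriv x u * φ * sin_sq_add_cos_sq (t * φ)⟩
  simp only [relNormal, hcross]

theorem h12_eq (hφ : φ ≠ 0) (hx0 : x u ≠ 0) (hx'0 : deriv x u ≠ 0)
    (hz : DifferentiableAt ℝ z u) :
    h12 (helicoidalIType φ c x z) u t = -(c * deriv x u) / x u := by
  have hx := differentiableAt_of_deriv_ne_zero hx'0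
  rw [h12, deriv_partialU_t hx hz, relNormal_eq hx hz, dot3]
  field_simp
  linear_combination -(c * deriv x u) * sin_sq_add_cos_sq (t * φ)

theorem h22_eq (hx0 : x u ≠ 0) (hx'0 : deriv x u ≠ 0) (hz : DifferentiableAt ℝ z u) :
    h22 (helicoidalIType φ c x z) u t = x u * φ ^ 2 * deriv z u / deriv x u := by
  rw [h22, deriv_partialT_t, relNormal_eq (differentiableAt_of_deriv_ne_zero hx'0) hz, dot3]
  field_simp
  linear_combination φ ^ 2 * x u * deriv z u * sin_sq_add_cos_sq (t * φ)

theorem h11_eq (hφ : φ ≠ 0) (hx0 : x u ≠ 0) (hx'0 : deriv x u ≠ 0)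
    (hx' : DifferentiableAt ℝ (deriv x) u) (hz : DifferentiableAt ℝ z u)
    (hz' : DifferentiableAt ℝ (deriv z) u) :
    h11 (helicoidalIType φ c x z) u t =
      (deriv x u * deriv (deriv z) u - deriv (deriv x) u * deriv z u) / deriv x u := by
  have hx := eventually_differentiableAt_of_deriv_ne_zero hx'.continuousAt hx'0
  rw [h11, relNormal_eq hx.self_of_nhds hz]
  by_cases hzNE : ∀ᶠ y in 𝓝[≠] u, DifferentiableAt ℝ z y
  · have hzN : ∀ᶠ y in 𝓝 u, DifferentiableAt ℝ z y := by
      rw [← nhdsNE_sup_pure, eventually_sup, eventually_pure]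
      exact ⟨hzNE, hz⟩
    rw [deriv_partialU_u hx hzN hx' hz', dot3]
    field_simp
    linear_combination -(x u * φ * deriv (deriv x) u * deriv z u) * sin_sq_add_cos_sq (t * φ)
  · rw [not_eventually] at hzNE
    rw [deriv_partialU_u_of_frequently_not_differentiableAt hzNE,
      deriv_eq_zero_of_frequently_not_differentiableAt hz'.continuousAt hzNE,
      deriv_deriv_eq_zero_of_frequently_not_differentiableAt hzNE]
    simp [dot3]

end helicoidalIType

theorem simplyIsotropic_helicoidal_iType_curvatures_general
    (φ c : ℝ) (hφ : φ ≠ 0) (I : Set ℝ) (x z : ℝ → ℝ)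
    (hx' : ∀ u ∈ I, DifferentiableAt ℝ (deriv x) u)
    (hz : ∀ u ∈ I, DifferentiableAt ℝ z u)
    (hz' : ∀ u ∈ I, DifferentiableAt ℝ (deriv z) u)
    (hx0 : ∀ u ∈ I, x u ≠ 0)
    (hx'0 : ∀ u ∈ I, deriv x u ≠ 0) :
    ∀ u ∈ I, ∀ t : ℝ,
      (Kiso (fun u' t' =>
          (x u' * Real.cos (t' * φ), x u' * Real.sin (t' * φ), z u' + c * t')) u t
        = -(deriv z u *
              (deriv (deriv x) u * deriv z u - deriv x u * deriv (deriv z) u))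
            / (x u * (deriv x u) ^ 4)
          - c ^ 2 / (φ ^ 2 * (x u) ^ 4)) ∧
      (Hiso (fun u' t' =>
          (x u' * Real.cos (t' * φ), x u' * Real.sin (t' * φ), z u' + c * t')) u t
        = ((deriv x u) ^ 2 * deriv z u
            - x u * (deriv (deriv x) u * deriv z u - deriv x u * deriv (deriv z) u))
            / (2 * x u * (deriv x u) ^ 3)) := by
  intro u hu t
  have hx0u := hx0 u hu
  have hx'0u := hx'0 u hu
  have hx := differentiableAt_of_deriv_ne_zero hx'0u
  change Kiso (helicoidalIType φ c x z) u t = _ ∧ Hiso (helicoidalIType φ c x z) u t = _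
  open helicoidalIType in
  rw [Kiso, Hiso, g11_eq hx (hz u hu), g12_eq hx (hz u hu), g22_eq,
    h11_eq hφ hx0u hx'0u (hx' u hu) (hz u hu) (hz' u hu), h12_eq hφ hx0u hx'0u (hz u hu),
    h22_eq hx0u hx'0u (hz u hu)]
  constructor <;> field_simp <;> ring

/-- Gaussian and mean curvature of the simply isotropic helicoidal
surface of i-type `Z₂(u,t) = (x cos(tφ), x sin(tφ), z + c t)`. -/
theorem simplyIsotropic_helicoidal_iType_curvatures
    (φ c : ℝ) (hφ : φ ≠ 0) (I : Set ℝ) (x z : ℝ → ℝ)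
    (hx : ∀ u ∈ I, DifferentiableAt ℝ x u)
    (hx' : ∀ u ∈ I, DifferentiableAt ℝ (deriv x) u)
    (hz : ∀ u ∈ I, DifferentiableAt ℝ z u)
    (hz' : ∀ u ∈ I, DifferentiableAt ℝ (deriv z) u)
    (hx0 : ∀ u ∈ I, x u ≠ 0)
    (hx'0 : ∀ u ∈ I, deriv x u ≠ 0) :
    ∀ u ∈ I, ∀ t : ℝ,
      (Kiso (fun u' t' =>
          (x u' * Real.cos (t' * φ), x u' * Real.sin (t' * φ), z u' + c * t')) u t
        = -(deriv z u *
              (deriv (deriv x) u * deriv z u - deriv x u * deriv (deriv z) u))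
            / (x u * (deriv x u) ^ 4)
          - c ^ 2 / (φ ^ 2 * (x u) ^ 4)) ∧
      (Hiso (fun u' t' =>
          (x u' * Real.cos (t' * φ), x u' * Real.sin (t' * φ), z u' + c * t')) u t
        = ((deriv x u) ^ 2 * deriv z u
            - x u * (deriv (deriv x) u * deriv z u - deriv x u * deriv (deriv z) u))
            / (2 * x u * (deriv x u) ^ 3)) :=
  simplyIsotropic_helicoidal_iType_curvatures_general φ c hφ I x z hx' hz hz' hx0 hx'0
end
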